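/- Fix t > 0, ε > 0, β, ρ ∈ ℝ, let δ = -|β| - |ρ|/t + √((|β| + |ρ|/t)² + 2ε/t), let γ₀ ≥ 0, let ν be a Borel measure on ℝ concentrated on (0,∞) with ∫ min(x,1) ν(dx) < ∞ and ∫_{x>1} e^{rx} ν(dx) < ∞ for all r < ε, and let π be a Borel probability measure on ℝ concentrated on (-∞,0). Then for every v ∈ ℝ with |v| < δ and every w ∈ ℝ one has Re Θ(v + iw) ≤ Θ(v), where Θ(u) = ∫_{(-∞,0)} ∫₀ᵗ θ_L(u·f_u(A,s)) ds π(dA) (in particular Θ(v) is real and finite). -/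

import Mathlib

open MeasureTheory

/-- `u·f_u(A,s) = ((e^{A(t-s)} - 1)/A)(uβ + u²/2) + ρu` for complex `u`. -/
noncomputable def ufc (t β ρ : ℝ) (u : ℂ) (A s : ℝ) : ℂ :=
  (((Real.exp (A * (t - s)) - 1) / A : ℝ) : ℂ) * (u * (β : ℂ) + u ^ 2 / 2) + (ρ : ℂ) * u

/-- `θ_L(z) = γ₀ z + ∫_{(0,∞)} (e^{zx} - 1) ν(dx)`. -/
noncomputable def thetaL (γ₀ : ℝ) (ν : Measure ℝ) (z : ℂ) : ℂ :=
  (γ₀ : ℂ) * z + ∫ x in Set.Ioi (0 : ℝ), (Complex.exp (z * (x : ℂ)) - 1) ∂ν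

/-- `Θ(u) = ∫_{(-∞,0)} ∫₀ᵗ θ_L(u·f_u(A,s)) ds π(dA)`. -/
noncomputable def Theta (t β ρ γ₀ : ℝ) (ν π : Measure ℝ) (u : ℂ) : ℂ :=
  ∫ A in Set.Iio (0 : ℝ), (∫ s in (0 : ℝ)..t, thetaL γ₀ ν (ufc t β ρ u A s)) ∂π

/-!
For real `v` the exponent `u·f_u(A,s)` is real, and passing from `v` to `v + iw` lowers its real
part by `((e^{A(t-s)} - 1)/A)·w²/2 ≥ 0`. Since `Re(e^{zx} - 1) ≤ e^{Re z·x} - 1` and `γ₀ ≥ 0`, the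
real part of `θ_L` can only grow when `z` is replaced by a real number `≥ Re z`; integrating this
pointwise inequality over `s` and `A` gives the claim. All integrals exist because
`δ` is the positive root of `x ↦ t(|β|x + x²/2) + |ρ|x - ε` and `(e^{A(t-s)} - 1)/A ∈ [0, t]`,
so `|v| < δ` keeps `Re(u·f_u) ≤ v·f_v ≤ |v·f_v|` uniformly below `ε`, where `θ_L` is continuous
and locally bounded.
-/

open Set Filter Topology Function
open scoped Interval

section ParametricIntervalIntegral

variable {X E : Type*} [TopologicalSpace X] [NormedAddCommGroup E] {U : Set X} {a b K : ℝ}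
  {F : X → ℝ → E}

lemma intervalIntegrable_of_continuousOn_uncurry (hab : a ≤ b)
    (hF : ContinuousOn (uncurry F) (U ×ˢ Icc a b)) {x : X} (hx : x ∈ U) :
    IntervalIntegrable (F x) volume a b :=
  ContinuousOn.intervalIntegrable_of_Icc hab <|
    hF.comp (continuousOn_const.prodMk continuousOn_id) fun _ hy => ⟨hx, hy⟩

lemma continuousOn_intervalIntegral_of_continuousOn_uncurry [FirstCountableTopology X]
    [NormedSpace ℝ E] (hU : IsOpen U) (hab : a ≤ b)
    (hF : ContinuousOn (uncurry F) (U ×ˢ Icc a b)) (hK : ∀ x ∈ U, ∀ y ∈ Icc a b, ‖F x y‖ ≤ K) :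
    ContinuousOn (fun x => ∫ y in a..b, F x y) U := by
  have hIoc : Ι a b ⊆ Icc a b := by rw [uIoc_of_le hab]; exact Ioc_subset_Icc_self
  intro x hx
  refine (intervalIntegral.continuousAt_of_dominated_interval (bound := fun _ => K) ?_ ?_
    intervalIntegrable_const ?_).continuousWithinAt
  · filter_upwards [hU.mem_nhds hx] with x' hx'
    exact (intervalIntegrable_of_continuousOn_uncurry hab hF hx').def'.aestronglyMeasurable
  · filter_upwards [hU.mem_nhds hx] with x' hx'
    exact ae_of_all _ fun y hy => hK x' hx' y (hIoc hy)
  · refine ae_of_all _ fun y hy => ?_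
    have hxy : ContinuousWithinAt (fun x' => F x' y) U x :=
      (hF (x, y) ⟨hx, hIoc hy⟩).comp (f := fun x' => (x', y))
        (continuousWithinAt_id.prodMk continuousWithinAt_const) fun _ hx' => ⟨hx', hIoc hy⟩
    exact hxy.continuousAt (hU.mem_nhds hx)

lemma integrableOn_intervalIntegral_of_continuousOn_uncurry [FirstCountableTopology X]
    [MeasurableSpace X] [OpensMeasurableSpace X] [NormedSpace ℝ E]
    [SecondCountableTopologyEither X E] {μ : Measure X} [IsFiniteMeasure μ] (hU : IsOpen U)
    (hab : a ≤ b) (hF : ContinuousOn (uncurry F) (U ×ˢ Icc a b))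
    (hK : ∀ x ∈ U, ∀ y ∈ Icc a b, ‖F x y‖ ≤ K) :
    IntegrableOn (fun x => ∫ y in a..b, F x y) U μ := by
  refine Integrable.mono' (integrableOn_const (C := K * |b - a|))
    ((continuousOn_intervalIntegral_of_continuousOn_uncurry hU hab hF hK).aestronglyMeasurable
      hU.measurableSet) ((ae_restrict_iff' hU.measurableSet).2 (ae_of_all _ fun x hx => ?_))
  exact intervalIntegral.norm_integral_le_of_norm_le_const fun y hy =>
    hK x hx y (by rw [uIoc_of_le hab] at hy; exact Ioc_subset_Icc_self hy)

end ParametricIntervalIntegral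

lemma re_setIntegral_intervalIntegral_mono {X : Type*} [TopologicalSpace X]
    [FirstCountableTopology X] [MeasurableSpace X] [OpensMeasurableSpace X] {μ : Measure X}
    [IsFiniteMeasure μ] {U : Set X} {a b : ℝ} {F G : X → ℝ → ℂ} (hU : IsOpen U)
    (hab : a ≤ b) (hF : ContinuousOn (uncurry F) (U ×ˢ Icc a b))
    (hG : ContinuousOn (uncurry G) (U ×ˢ Icc a b))
    (hFK : ∃ K, ∀ x ∈ U, ∀ y ∈ Icc a b, ‖F x y‖ ≤ K)
    (hGK : ∃ K, ∀ x ∈ U, ∀ y ∈ Icc a b, ‖G x y‖ ≤ K)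
    (hFG : ∀ x ∈ U, ∀ y ∈ Icc a b, (F x y).re ≤ (G x y).re) :
    (∫ x in U, (∫ y in a..b, F x y) ∂μ).re ≤
      (∫ x in U, (∫ y in a..b, G x y) ∂μ).re := by
  obtain ⟨K, hFK⟩ := hFK
  obtain ⟨L, hGL⟩ := hGK
  have hFi := integrableOn_intervalIntegral_of_continuousOn_uncurry (μ := μ) hU hab hF hFK
  have hGi := integrableOn_intervalIntegral_of_continuousOn_uncurry (μ := μ) hU hab hG hGL
  rw [← RCLike.re_to_complex, ← integral_re hFi, ← RCLike.re_to_complex, ← integral_re hGi]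
  refine setIntegral_mono_on hFi.re hGi.re hU.measurableSet fun x hx => ?_
  have hFx := intervalIntegrable_of_continuousOn_uncurry hab hF hx
  have hGx := intervalIntegrable_of_continuousOn_uncurry hab hG hx
  rw [← intervalIntegral.intervalIntegral_re hFx, ← intervalIntegral.intervalIntegral_re hGx]
  exact intervalIntegral.integral_mono_on hab ⟨hFx.1.re, hFx.2.re⟩ ⟨hGx.1.re, hGx.2.re⟩
    fun y hy => hFG x hx y hy

lemma exp_mul_sub_one_div_mem_Icc {A τ : ℝ} (hA : A < 0) (hτ : 0 ≤ τ) :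
    (Real.exp (A * τ) - 1) / A ∈ Icc 0 τ := by
  constructor
  · refine div_nonneg_of_nonpos ?_ hA.le
    linarith [Real.exp_le_one_iff.2 (mul_nonpos_of_nonpos_of_nonneg hA.le hτ)]
  · rw [div_le_iff_of_neg hA]
    linarith [Real.add_one_le_exp (A * τ)]

section Ufc

variable {t β ρ A s : ℝ}

lemma norm_ufc_le (hA : A < 0) (hs : s ∈ Icc 0 t) (u : ℂ) :
    ‖ufc t β ρ u A s‖ ≤ t * (‖u‖ * |β| + ‖u‖ ^ 2 / 2) + |ρ| * ‖u‖ := by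
  obtain ⟨hc0, hct⟩ := exp_mul_sub_one_div_mem_Icc hA (sub_nonneg.2 hs.2)
  set c := (Real.exp (A * (t - s)) - 1) / A
  calc ‖ufc t β ρ u A s‖ ≤ c * (‖u‖ * |β| + ‖u‖ ^ 2 / 2) + |ρ| * ‖u‖ := by
        refine (norm_add_le _ _).trans ?_
        rw [norm_mul, norm_mul, Complex.norm_real, Complex.norm_real, Real.norm_of_nonneg hc0,
          Real.norm_eq_abs]
        gcongr
        refine (norm_add_le _ _).trans ?_
        simp
    _ ≤ t * (‖u‖ * |β| + ‖u‖ ^ 2 / 2) + |ρ| * ‖u‖ := by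
        gcongr
        linarith [hs.1]

lemma re_ufc_le (hA : A < 0) (hst : s ≤ t) (v w : ℝ) :
    (ufc t β ρ (v + w * Complex.I) A s).re ≤ (ufc t β ρ v A s).re := by
  have hc0 := (exp_mul_sub_one_div_mem_Icc hA (sub_nonneg.2 hst)).1
  set c := (Real.exp (A * (t - s)) - 1) / A
  have hre (u : ℂ) : (ufc t β ρ u A s).re = c * (u * β + u ^ 2 / 2).re + ρ * u.re := by
    simp only [ufc, Complex.add_re, Complex.re_ofReal_mul, c]
  rw [hre, hre]
  simp [sq]
  nlinarith [mul_nonneg hc0 (sq_nonneg w)]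

lemma ufc_ofReal (t β ρ v A s : ℝ) :
    ufc t β ρ v A s =
      (((Real.exp (A * (t - s)) - 1) / A * (v * β + v ^ 2 / 2) + ρ * v : ℝ) : ℂ) := by
  push_cast [ufc]
  ring

lemma ofReal_re_ufc (t β ρ v A s : ℝ) : ((ufc t β ρ v A s).re : ℂ) = ufc t β ρ v A s := by
  rw [ufc_ofReal, Complex.ofReal_re]

lemma continuousOn_ufc (t β ρ : ℝ) (u : ℂ) :
    ContinuousOn (uncurry (ufc t β ρ u)) {p | p.1 ≠ 0} := by
  have hc : ContinuousOn (fun p : ℝ × ℝ => (Real.exp (p.1 * (t - p.2)) - 1) / p.1)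
      {p | p.1 ≠ 0} :=
    ContinuousOn.div (by fun_prop) (by fun_prop) fun _ hp => hp
  exact ((Complex.continuous_ofReal.comp_continuousOn hc).mul continuousOn_const).add
    continuousOn_const

end Ufc

noncomputable def levyKernelBound (C r x : ℝ) : ℝ :=
  C * min x 1 + (Ioi 1).indicator (fun y => Real.exp (r * y)) x

lemma norm_cexp_mul_sub_one_le {z : ℂ} {r M x : ℝ} (hre : z.re ≤ r) (hM : ‖z‖ ≤ M)
    (hx : 0 < x) :
    ‖Complex.exp (z * x) - 1‖ ≤ levyKernelBound (M * Real.exp M + 1) r x := by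
  have hM0 : 0 ≤ M := (norm_nonneg z).trans hM
  rcases le_or_gt x 1 with hx1 | hx1
  · rw [levyKernelBound, min_eq_left hx1,
      indicator_of_notMem (show x ∉ Ioi 1 from not_lt.2 hx1), add_zero]
    have hzx : ‖z * x‖ ≤ M * x := by
      rw [norm_mul, Complex.norm_real, Real.norm_of_nonneg hx.le]; gcongr
    have hzx' : ‖z * x‖ ≤ M := hzx.trans (by nlinarith)
    calc ‖Complex.exp (z * x) - 1‖ ≤ ‖z * x‖ * Real.exp ‖z * x‖ := by
          simpa using Complex.norm_exp_sub_sum_le_norm_mul_exp (z * x) 1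
      _ ≤ M * x * Real.exp M := by gcongr
      _ ≤ (M * Real.exp M + 1) * x := by nlinarith
  · rw [levyKernelBound, min_eq_right hx1.le, indicator_of_mem (show x ∈ Ioi 1 from hx1)]
    calc ‖Complex.exp (z * x) - 1‖ ≤ ‖Complex.exp (z * x)‖ + 1 := by
          simpa using norm_sub_le (Complex.exp (z * x)) 1
      _ = Real.exp (z.re * x) + 1 := by simp [Complex.norm_exp]
      _ ≤ Real.exp (r * x) + 1 := by gcongr
      _ ≤ (M * Real.exp M + 1) * 1 + Real.exp (r * x) := by nlinarith [Real.exp_pos M]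

lemma thetaL_ofReal (γ₀ : ℝ) (ν : Measure ℝ) (g : ℝ) :
    thetaL γ₀ ν g = ((γ₀ * g + ∫ x in Ioi 0, (Real.exp (g * x) - 1) ∂ν : ℝ) : ℂ) := by
  push_cast [thetaL, ← integral_complex_ofReal]
  rfl

section LevyExponent

variable {ε γ₀ t β ρ : ℝ} {ν : Measure ℝ} (hmin : Integrable (fun x : ℝ => min x 1) ν)
  (hexp : ∀ r : ℝ, r < ε → IntegrableOn (fun x : ℝ => Real.exp (r * x)) {x | 1 < x} ν)
include hmin hexp

lemma integrable_levyKernelBound (C : ℝ) {r : ℝ} (hr : r < ε) :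
    Integrable (levyKernelBound C r) ν :=
  (hmin.const_mul C).add ((hexp r hr).integrable_indicator measurableSet_Ioi)

lemma integrableOn_cexp_mul_sub_one {z : ℂ} (hz : z.re < ε) :
    IntegrableOn (fun x : ℝ => Complex.exp (z * x) - 1) (Ioi 0) ν :=
  ((integrable_levyKernelBound hmin hexp (‖z‖ * Real.exp ‖z‖ + 1) hz).integrableOn).mono'
    (by fun_prop) ((ae_restrict_iff' measurableSet_Ioi).2 <|
      ae_of_all _ fun _ hx => norm_cexp_mul_sub_one_le le_rfl le_rfl hx)

lemma exists_norm_thetaL_le {r : ℝ} (hr : r < ε) (M : ℝ) :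
    ∃ K, ∀ z : ℂ, z.re ≤ r → ‖z‖ ≤ M → ‖thetaL γ₀ ν z‖ ≤ K := by
  refine ⟨|γ₀| * M + ∫ x in Ioi 0, levyKernelBound (M * Real.exp M + 1) r x ∂ν,
    fun z hre hM => (norm_add_le _ _).trans (add_le_add ?_ ?_)⟩
  · rw [norm_mul, Complex.norm_real, Real.norm_eq_abs]; gcongr
  · exact norm_integral_le_of_norm_le (integrable_levyKernelBound hmin hexp _ hr).integrableOn
      ((ae_restrict_iff' measurableSet_Ioi).2 <|
        ae_of_all _ fun _ hx => norm_cexp_mul_sub_one_le hre hM hx)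

lemma continuousOn_thetaL : ContinuousOn (thetaL γ₀ ν) {z | z.re < ε} := by
  refine continuousOn_of_forall_continuousAt fun z₀ (hz₀ : z₀.re < ε) => ?_
  obtain ⟨r, hz₀r, hrε⟩ := exists_between hz₀
  have hre : ∀ᶠ z : ℂ in 𝓝 z₀, z.re ≤ r :=
    (Complex.continuous_re.continuousAt.eventually_lt continuousAt_const hz₀r).mono
      fun _ h => h.le
  have hM : ∀ᶠ z : ℂ in 𝓝 z₀, ‖z‖ ≤ ‖z₀‖ + 1 :=
    (continuous_norm.continuousAt.eventually_lt continuousAt_const (lt_add_one _)).mono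
      fun _ h => h.le
  refine (continuous_const.mul continuous_id).continuousAt.add <|
    continuousAt_of_dominated
      (bound := levyKernelBound ((‖z₀‖ + 1) * Real.exp (‖z₀‖ + 1) + 1) r)
      (Eventually.of_forall fun _ => by fun_prop) ?_
      (integrable_levyKernelBound hmin hexp _ hrε).integrableOn
      (ae_of_all _ fun _ => by fun_prop)
  filter_upwards [hre, hM] with z hzr hzM
  exact (ae_restrict_iff' measurableSet_Ioi).2 <|
    ae_of_all _ fun _ hx => norm_cexp_mul_sub_one_le hzr hzM hx

lemma re_thetaL_le (hγ₀ : 0 ≤ γ₀) {z : ℂ} {g : ℝ} (hz : z.re ≤ g) (hg : g < ε) :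
    (thetaL γ₀ ν z).re ≤ (thetaL γ₀ ν g).re := by
  have hzi := integrableOn_cexp_mul_sub_one hmin hexp (hz.trans_lt hg)
  have hgi := integrableOn_cexp_mul_sub_one hmin hexp (z := g) (by simpa using hg)
  have hzre : (∫ x in Ioi 0, (Complex.exp (z * x) - 1) ∂ν).re =
      ∫ x in Ioi 0, RCLike.re (Complex.exp (z * x) - 1) ∂ν := (integral_re hzi).symm
  have hgre : (∫ x in Ioi 0, (Complex.exp (g * x) - 1) ∂ν).re =
      ∫ x in Ioi 0, RCLike.re (Complex.exp (g * x) - 1) ∂ν := (integral_re hgi).symm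
  rw [thetaL, thetaL, Complex.add_re, Complex.add_re, Complex.re_ofReal_mul,
    Complex.re_ofReal_mul, hzre, hgre, Complex.ofReal_re]
  refine add_le_add (mul_le_mul_of_nonneg_left hz hγ₀)
    (setIntegral_mono_on hzi.re hgi.re measurableSet_Ioi fun x (hx : 0 < x) => ?_)
  calc RCLike.re (Complex.exp (z * x) - 1) ≤ ‖Complex.exp (z * x)‖ - 1 := by
        simpa using Complex.re_le_norm (Complex.exp (z * x))
    _ = Real.exp (z.re * x) - 1 := by simp [Complex.norm_exp]
    _ ≤ Real.exp (g * x) - 1 := by gcongr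
    _ = RCLike.re (Complex.exp (g * x) - 1) := by norm_cast

lemma continuousOn_thetaL_ufc {u : ℂ}
    (hu : ∀ A ∈ Iio 0, ∀ s ∈ Icc 0 t, (ufc t β ρ u A s).re < ε) :
    ContinuousOn (uncurry fun A s => thetaL γ₀ ν (ufc t β ρ u A s)) (Iio 0 ×ˢ Icc 0 t) :=
  (continuousOn_thetaL hmin hexp).comp ((continuousOn_ufc t β ρ u).mono fun _ hp => hp.1.ne)
    fun p hp => hu p.1 hp.1 p.2 hp.2

lemma exists_norm_thetaL_ufc_le {r : ℝ} (hr : r < ε) {u : ℂ}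
    (hu : ∀ A ∈ Iio 0, ∀ s ∈ Icc 0 t, (ufc t β ρ u A s).re ≤ r) :
    ∃ K, ∀ A ∈ Iio 0, ∀ s ∈ Icc 0 t, ‖thetaL γ₀ ν (ufc t β ρ u A s)‖ ≤ K := by
  obtain ⟨K, hK⟩ := exists_norm_thetaL_le (γ₀ := γ₀) hmin hexp hr
    (t * (‖u‖ * |β| + ‖u‖ ^ 2 / 2) + |ρ| * ‖u‖)
  exact ⟨K, fun A hA s hs => hK _ (hu A hA s hs) (norm_ufc_le hA hs u)⟩

end LevyExponent

lemma im_Theta_ofReal (t β ρ γ₀ : ℝ) (ν π : Measure ℝ) (v : ℝ) :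
    (Theta t β ρ γ₀ ν π v).im = 0 := by
  simp_rw [Theta, ufc_ofReal, thetaL_ofReal, intervalIntegral.integral_ofReal,
    integral_complex_ofReal, Complex.ofReal_im]

lemma quadratic_lt_of_abs_lt {t ε β ρ v : ℝ} (ht : 0 < t)
    (hv : |v| < -|β| - |ρ| / t + Real.sqrt ((|β| + |ρ| / t) ^ 2 + 2 * ε / t)) :
    t * (|v| * |β| + |v| ^ 2 / 2) + |ρ| * |v| < ε := by
  set D := |β| + |ρ| / t
  have h : (|v| + D) ^ 2 < D ^ 2 + 2 * ε / t := (Real.lt_sqrt (by positivity)).1 (by linarith)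
  have h' : ((|v| + D) ^ 2 - D ^ 2) * t < 2 * ε := (lt_div_iff₀ ht).1 (by linarith)
  have hD : t * (|v| * |β| + |v| ^ 2 / 2) + |ρ| * |v| = ((|v| + D) ^ 2 - D ^ 2) * t / 2 := by
    simp only [D]; field_simp; ring
  linarith

theorem stmt_11_general (t ε β ρ γ₀ : ℝ) (ht : 0 < t) (hγ₀ : 0 ≤ γ₀) (ν : Measure ℝ)
    (hmin : Integrable (fun x : ℝ => min x 1) ν)
    (hexp : ∀ r : ℝ, r < ε → IntegrableOn (fun x : ℝ => Real.exp (r * x)) {x | 1 < x} ν)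
    (π : Measure ℝ) [IsProbabilityMeasure π] :
    ∀ v w : ℝ, |v| < -|β| - |ρ| / t + Real.sqrt ((|β| + |ρ| / t) ^ 2 + 2 * ε / t) →
      (Theta t β ρ γ₀ ν π ((v : ℂ) + (w : ℂ) * Complex.I)).re ≤
          (Theta t β ρ γ₀ ν π (v : ℂ)).re ∧
        (Theta t β ρ γ₀ ν π (v : ℂ)).im = 0 := by
  intro v w hv
  set r := t * (|v| * |β| + |v| ^ 2 / 2) + |ρ| * |v|
  have hr : r < ε := quadratic_lt_of_abs_lt ht hv
  have hv_le : ∀ A ∈ Iio 0, ∀ s ∈ Icc 0 t, (ufc t β ρ v A s).re ≤ r := fun A hA s hs =>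
    (Complex.re_le_norm _).trans <| by
      simpa only [Complex.norm_real, Real.norm_eq_abs] using norm_ufc_le hA hs v
  have hvw_le :
      ∀ A ∈ Iio 0, ∀ s ∈ Icc 0 t, (ufc t β ρ (v + w * Complex.I) A s).re ≤ r :=
    fun A hA s hs => (re_ufc_le hA hs.2 v w).trans (hv_le A hA s hs)
  refine ⟨re_setIntegral_intervalIntegral_mono isOpen_Iio ht.le
    (continuousOn_thetaL_ufc hmin hexp fun A hA s hs => (hvw_le A hA s hs).trans_lt hr)
    (continuousOn_thetaL_ufc hmin hexp fun A hA s hs => (hv_le A hA s hs).trans_lt hr)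
    (exists_norm_thetaL_ufc_le hmin hexp hr hvw_le) (exists_norm_thetaL_ufc_le hmin hexp hr hv_le)
    fun A hA s hs => ?_, im_Theta_ofReal t β ρ γ₀ ν π v⟩
  rw [← ofReal_re_ufc]
  exact re_thetaL_le hmin hexp hγ₀ (re_ufc_le hA hs.2 v w) ((hv_le A hA s hs).trans_lt hr)

theorem stmt_11 (t ε β ρ γ₀ : ℝ) (ht : 0 < t) (hε : 0 < ε) (hγ₀ : 0 ≤ γ₀)
    (ν : Measure ℝ) (hν : ν (Set.Ioi (0 : ℝ))ᶜ = 0)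
    (hmin : Integrable (fun x : ℝ => min x 1) ν)
    (hexp : ∀ r : ℝ, r < ε → IntegrableOn (fun x : ℝ => Real.exp (r * x)) {x | 1 < x} ν)
    (π : Measure ℝ) [IsProbabilityMeasure π] (hπ : π (Set.Iio (0 : ℝ))ᶜ = 0) :
    ∀ v w : ℝ, |v| < -|β| - |ρ| / t + Real.sqrt ((|β| + |ρ| / t) ^ 2 + 2 * ε / t) →
      (Theta t β ρ γ₀ ν π ((v : ℂ) + (w : ℂ) * Complex.I)).re ≤
          (Theta t β ρ γ₀ ν π (v : ℂ)).re ∧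
        (Theta t β ρ γ₀ ν π (v : ℂ)).im = 0 :=
  stmt_11_general t ε β ρ γ₀ ht hγ₀ ν hmin hexp π
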